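/- Let f : [a,b] → ℝ be continuous, let A ⊆ [a,b] be compact, and set B := f(A). Then there exists an injective function γ : Z(B) → Z(A) such that for each gap z ∈ Z(B), writing γ(z) = (x, x′), one has z ⊆ (f(x), f(x′)) (here (f(x), f(x′)) denotes the open interval with endpoints f(x) and f(x′)). -/
import Mathlib


open Set MeasureTheory Filter

noncomputable section

/-- The gaps `Z(A)` of a set `A ⊆ ℝ`: pairs `(α, β)` with `α, β ∈ A`, `α < β` and
`(α, β) ∩ A = ∅`. A pair `(α, β)` represents the open interval `Ioo α β`. -/
def gaps (A : Set ℝ) : Set (ℝ × ℝ) :=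
  {p | p.1 ∈ A ∧ p.2 ∈ A ∧ p.1 < p.2 ∧ Ioo p.1 p.2 ∩ A = ∅}

/-- The length of a gap. -/
def gapLen (p : ℝ × ℝ) : ℝ := p.2 - p.1

/-- `A` is a (compact) set of `k`-degree: the series `∑_{z ∈ Z(A)} |z|^(1/k)` converges. -/
def IsDegreeSet (k : ℝ) (A : Set ℝ) : Prop :=
  IsCompact A ∧ Summable fun z : gaps A => gapLen z.1 ^ (1 / k)

/-- `A` is a `0_k`-set: a set of `k`-degree of Lebesgue measure zero. -/
def IsZeroSet (k : ℝ) (A : Set ℝ) : Prop :=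
  IsDegreeSet k A ∧ volume A = 0

/-- `A` is a `0_{<k}`-set: a `0_t`-set for every `0 < t < k`. -/
def IsZeroLtSet (k : ℝ) (A : Set ℝ) : Prop :=
  ∀ t : ℝ, 0 < t → t < k → IsZeroSet t A

/-- `A` is a `σ-0_k` set: a countable union of `0_k`-sets. -/
def IsSigmaZeroSet (k : ℝ) (A : Set ℝ) : Prop :=
  ∃ B : ℕ → Set ℝ, (∀ i, IsZeroSet k (B i)) ∧ A = ⋃ i, B i

/-- `A` is a `σ-0_{<k}` set: a countable union of `0_{<k}`-sets. -/
def IsSigmaZeroLtSet (k : ℝ) (A : Set ℝ) : Prop :=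
  ∃ B : ℕ → Set ℝ, (∀ i, IsZeroLtSet k (B i)) ∧ A = ⋃ i, B i

/-- `f` is of class `C^{k+λ}`: `f` is `C^k` and the `k`-th derivative is locally
Hölder continuous of exponent `λ`. -/
def ClassCHolder {E F : Type*} [NormedAddCommGroup E] [NormedSpace ℝ E]
    [NormedAddCommGroup F] [NormedSpace ℝ F] (k : ℕ) (lam : ℝ) (f : E → F) : Prop :=
  ContDiff ℝ k f ∧
    ∀ x₀ : E, ∃ U ∈ nhds x₀, ∃ M : ℝ, ∀ x ∈ U, ∀ y ∈ U,
      ‖iteratedFDeriv ℝ k f x - iteratedFDeriv ℝ k f y‖ ≤ M * ‖x - y‖ ^ lam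

/-- `f` is of class `C^{<t}`: `f` is of class `C^{p+μ}` for every `p ∈ ℕ`, `μ ∈ [0,1)`
with `p + μ < t`. -/
def ClassCLt {E F : Type*} [NormedAddCommGroup E] [NormedSpace ℝ E]
    [NormedAddCommGroup F] [NormedSpace ℝ F] (t : ℝ) (f : E → F) : Prop :=
  ∀ (p : ℕ) (mu : ℝ), 0 ≤ mu → mu < 1 → (p : ℝ) + mu < t → ClassCHolder p mu f

/-- The critical points set (of rank zero) `C_p f = {x : Df(x) = 0}`. -/
def Cp {E F : Type*} [NormedAddCommGroup E] [NormedSpace ℝ E]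
    [NormedAddCommGroup F] [NormedSpace ℝ F] (f : E → F) : Set E :=
  {x | fderiv ℝ f x = 0}

/-- The critical values set `C_v f = f(C_p f)`. -/
def Cv {E F : Type*} [NormedAddCommGroup E] [NormedSpace ℝ E]
    [NormedAddCommGroup F] [NormedSpace ℝ F] (f : E → F) : Set F :=
  f '' Cp f

/-- `ψ` is a `D^k`-function on `B`: there is `K > 0` with
`|ψ b - ψ b'|^k ≤ K * |b - b'|` for all `b, b' ∈ B`. -/
def IsDFun {E F : Type*} [PseudoMetricSpace E] [PseudoMetricSpace F]
    (k : ℝ) (B : Set E) (ψ : E → F) : Prop :=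
  ∃ K > 0, ∀ b ∈ B, ∀ b' ∈ B, dist (ψ b) (ψ b') ^ k ≤ K * dist b b'

private def midp (p : ℝ × ℝ) : ℝ := (p.1 + p.2) / 2

private lemma midp_mem {p : ℝ × ℝ} (h : p.1 < p.2) : p.1 < midp p ∧ midp p < p.2 := by
  unfold midp; constructor <;> linarith

private lemma gap_fst_inj {A : Set ℝ} {g h : ℝ × ℝ} (hg : g ∈ gaps A) (hh : h ∈ gaps A)
    (h1 : g.1 = h.1) : g = h := by
  obtain ⟨hg1, hg2, hglt, hge⟩ := hg
  obtain ⟨hh1, hh2, hhlt, hhe⟩ := hh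
  rcases lt_trichotomy g.2 h.2 with hc | hc | hc
  · exfalso
    have hx : g.2 ∈ Ioo h.1 h.2 ∩ A := ⟨⟨by rw [← h1]; exact hglt, hc⟩, hg2⟩
    rw [hhe] at hx; exact hx
  · exact Prod.ext h1 hc
  · exfalso
    have hx : h.2 ∈ Ioo g.1 g.2 ∩ A := ⟨⟨by rw [h1]; exact hhlt, hc⟩, hh2⟩
    rw [hge] at hx; exact hx

private lemma gaps_disj {B : Set ℝ} {p q : ℝ × ℝ} (hp : p ∈ gaps B) (hq : q ∈ gaps B)
    (hne : p ≠ q) : p.2 ≤ q.1 ∨ q.2 ≤ p.1 := by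
  by_contra hcon
  push_neg at hcon
  obtain ⟨h1, h2⟩ := hcon
  obtain ⟨hp1, hp2, hplt, hpe⟩ := hp
  obtain ⟨hq1, hq2, hqlt, hqe⟩ := hq
  rcases lt_trichotomy p.1 q.1 with hc | hc | hc
  · have hx : q.1 ∈ Ioo p.1 p.2 ∩ B := ⟨⟨hc, h1⟩, hq1⟩
    rw [hpe] at hx; exact hx
  · exact hne (gap_fst_inj ⟨hp1, hp2, hplt, hpe⟩ ⟨hq1, hq2, hqlt, hqe⟩ hc)
  · have hx : p.1 ∈ Ioo q.1 q.2 ∩ B := ⟨⟨hc, h2⟩, hp1⟩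
    rw [hqe] at hx; exact hx

private lemma TL {a b : ℝ} {f : ℝ → ℝ} (hf : ContinuousOn f (Set.Icc a b))
    {A : Set ℝ} (hA : A ⊆ Set.Icc a b) (hAc : IsClosed A)
    {m u v : ℝ} (hm : m ∉ f '' A) (hu : u ∈ A) (hv : v ∈ A) (huv : u < v)
    (h1 : f u < m) (h2 : m < f v) :
    ∃ x x' : ℝ, (x, x') ∈ gaps A ∧ u ≤ x ∧ x' ≤ v ∧ f x < m ∧ m < f x' := by
  have hC : IsClosed (Set.Icc a b ∩ f ⁻¹' Set.Ici m) :=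
    hf.preimage_isClosed_of_isClosed isClosed_Icc isClosed_Ici
  set E : Set ℝ := A ∩ Set.Icc u v ∩ (Set.Icc a b ∩ f ⁻¹' Set.Ici m) with hEdef
  have hEc : IsClosed E := (hAc.inter isClosed_Icc).inter hC
  have hvE : v ∈ E := ⟨⟨hv, ⟨huv.le, le_rfl⟩⟩, ⟨hA hv, h2.le⟩⟩
  have hEne : E.Nonempty := ⟨v, hvE⟩
  have hEbdd : BddBelow E := ⟨u, fun t ht => ht.1.2.1⟩
  set x' := sInf E with hx'def
  have hx'E : x' ∈ E := hEc.csInf_mem hEne hEbdd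
  have hx'A : x' ∈ A := hx'E.1.1
  have hx'v : x' ≤ v := hx'E.1.2.2
  have hfx' : m < f x' := (hx'E.2.2 : m ≤ f x').lt_of_ne (fun he => hm ⟨x', hx'A, he.symm⟩)
  have hulex' : u ≤ x' := le_csInf hEne (fun t ht => ht.1.2.1)
  have hux' : u < x' := hulex'.lt_of_ne (by
    intro he; rw [← he] at hfx'; exact absurd h1 (not_lt.mpr hfx'.le))
  set D : Set ℝ := A ∩ Set.Ico u x' with hDdef
  have huD : u ∈ D := ⟨hu, ⟨le_rfl, hux'⟩⟩
  have hDne : D.Nonempty := ⟨u, huD⟩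
  have hDbdd : BddAbove D := ⟨x', fun t ht => ht.2.2.le⟩
  set x := sSup D with hxdef
  have hxmem : x ∈ A ∩ Set.Icc u x' := by
    have hsub : D ⊆ A ∩ Set.Icc u x' := fun t ht => ⟨ht.1, ht.2.1, ht.2.2.le⟩
    exact closure_minimal hsub (hAc.inter isClosed_Icc) (csSup_mem_closure hDne hDbdd)
  have hxA : x ∈ A := hxmem.1
  have hux : u ≤ x := hxmem.2.1
  have hxx'le : x ≤ x' := hxmem.2.2
  have hxx' : x < x' := by
    rcases hxx'le.lt_or_eq with h | h
    · exact h
    exfalso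
    have hcw : ContinuousWithinAt f (Set.Icc a b) x' := hf x' (hA hx'A)
    rw [Metric.continuousWithinAt_iff] at hcw
    obtain ⟨δ, hδ, hδp⟩ := hcw (f x' - m) (by linarith)
    obtain ⟨t, htD, htgt⟩ := exists_lt_of_lt_csSup hDne (show x' - δ < sSup D by
      rw [← hxdef, ← h]; linarith)
    have htA : t ∈ A := htD.1
    have htlt : t < x' := htD.2.2
    have hdist : dist t x' < δ := by
      rw [Real.dist_eq, abs_lt]; constructor <;> linarith
    have hfd := hδp (hA htA) hdist
    rw [Real.dist_eq, abs_lt] at hfd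
    have hftm : m < f t := by linarith
    have htE : t ∈ E := ⟨⟨htA, ⟨htD.2.1, le_trans htlt.le hx'v⟩⟩, ⟨hA htA, hftm.le⟩⟩
    exact absurd htlt (not_lt.mpr (csInf_le hEbdd htE))
  have hfx : f x < m := by
    by_contra hcon
    push_neg at hcon
    have hxE : x ∈ E := ⟨⟨hxA, ⟨hux, le_trans hxx'le hx'v⟩⟩, ⟨hA hxA, hcon⟩⟩
    exact absurd hxx' (not_lt.mpr (csInf_le hEbdd hxE))
  have hgapE : Set.Ioo x x' ∩ A = ∅ := by
    ext t
    simp only [Set.mem_inter_iff, Set.mem_Ioo, Set.mem_empty_iff_false, iff_false, not_and]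
    rintro ⟨hxt, htx'⟩ htA
    have htD : t ∈ D := ⟨htA, ⟨le_trans hux hxt.le, htx'⟩⟩
    exact absurd hxt (not_lt.mpr (le_csSup hDbdd htD))
  exact ⟨x, x', ⟨hxA, hx'A, hxx', hgapE⟩, hux, hx'v, hfx, hfx'⟩


private lemma TL2 {a b : ℝ} {f : ℝ → ℝ} (hf : ContinuousOn f (Set.Icc a b))
    {A : Set ℝ} (hA : A ⊆ Set.Icc a b) (hAc : IsClosed A)
    {m u v : ℝ} (hm : m ∉ f '' A) (hu : u ∈ A) (hv : v ∈ A) (huv : u < v)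
    (hor : (f u < m ∧ m < f v) ∨ (f v < m ∧ m < f u)) :
    ∃ x x' : ℝ, (x, x') ∈ gaps A ∧ u ≤ x ∧ x' ≤ v ∧
      ((f x < m ∧ m < f x') ∨ (f x' < m ∧ m < f x)) := by
  rcases hor with ⟨h1, h2⟩ | ⟨h1, h2⟩
  · obtain ⟨x, x', hg, h3, h4, h5, h6⟩ := TL hf hA hAc hm hu hv huv h1 h2
    exact ⟨x, x', hg, h3, h4, Or.inl ⟨h5, h6⟩⟩
  · have hm' : -m ∉ (fun t => -f t) '' A := by
      rintro ⟨t, htA, hte⟩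
      refine hm ⟨t, htA, ?_⟩
      have : -f t = -m := hte
      linarith
    obtain ⟨x, x', hg, h3, h4, h5, h6⟩ := TL (hf.neg) hA hAc hm' hu hv huv
      (show -f u < -m by simpa using h2) (show -m < -f v by simpa using h1)
    refine ⟨x, x', hg, h3, h4, Or.inr ⟨?_, ?_⟩⟩
    · have : -m < -f x' := h6
      linarith
    · have : -f x < -m := h5
      linarith

private lemma sep_finite {a b δ : ℝ} (hδ : 0 < δ) {L : Set ℝ} (hL : L ⊆ Set.Icc a b)
    (hsep : ∀ x ∈ L, ∀ y ∈ L, x < y → x + δ ≤ y) : L.Finite := by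
  have hinj : Set.InjOn (fun x : ℝ => ⌊(x - a) / δ⌋) L := by
    intro x hx y hy he
    by_contra hne
    have key : ∀ p ∈ L, ∀ q ∈ L, p < q →
        ⌊(p - a) / δ⌋ ≠ ⌊(q - a) / δ⌋ := by
      intro p hp q hq hpq
      have h1 := hsep p hp q hq hpq
      have h2 : (p - a) / δ + 1 ≤ (q - a) / δ := by
        rw [div_add' _ _ _ (ne_of_gt hδ)]
        apply div_le_div_of_nonneg_right ?_ hδ.le |>.trans_eq rfl
        · linarith
      have h3 : ⌊(p - a) / δ⌋ + 1 ≤ ⌊(q - a) / δ⌋ := by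
        have := Int.floor_le_floor h2
        rwa [Int.floor_add_one] at this
      omega
    rcases lt_or_gt_of_ne hne with hlt | hlt
    · exact key x hx y hy hlt he
    · exact key y hy x hx hlt he.symm
  have himgfin : ((fun x : ℝ => ⌊(x - a) / δ⌋) '' L).Finite := by
    apply (Set.finite_Icc (0 : ℤ) ⌊(b - a) / δ⌋).subset
    rintro n ⟨x, hx, rfl⟩
    have hx' := hL hx
    constructor
    · have : (0 : ℝ) ≤ (x - a) / δ := div_nonneg (by linarith [hx'.1]) hδ.le
      exact Int.floor_nonneg.mpr this
    · exact Int.floor_le_floor (by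
        apply div_le_div_of_nonneg_right ?_ hδ.le |>.trans_eq rfl
        · linarith [hx'.2])
  exact Set.Finite.of_finite_image himgfin hinj

private lemma gaps_large_finite {a b : ℝ} {A : Set ℝ} (hA : A ⊆ Set.Icc a b)
    {δ : ℝ} (hδ : 0 < δ) : {g : ℝ × ℝ | g ∈ gaps A ∧ δ ≤ g.2 - g.1}.Finite := by
  set S := {g : ℝ × ℝ | g ∈ gaps A ∧ δ ≤ g.2 - g.1} with hSdef
  have hinj : Set.InjOn Prod.fst S := fun g hg h hh he => gap_fst_inj hg.1 hh.1 he
  have hLsub : Prod.fst '' S ⊆ Set.Icc a b := by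
    rintro x ⟨g, hg, rfl⟩
    exact hA hg.1.1
  have hsep : ∀ x ∈ Prod.fst '' S, ∀ y ∈ Prod.fst '' S, x < y → x + δ ≤ y := by
    rintro x ⟨g, hg, rfl⟩ y ⟨h, hh, rfl⟩ hlt
    obtain ⟨⟨hgA1, hgA2, hglt, hge⟩, hglen⟩ := hg
    obtain ⟨⟨hhA1, hhA2, hhlt, hhe⟩, hhlen⟩ := hh
    have hmem : h.1 ∉ Set.Ioo g.1 g.2 := by
      intro hmem
      have hx : h.1 ∈ Set.Ioo g.1 g.2 ∩ A := ⟨hmem, hhA1⟩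
      rw [hge] at hx; exact hx
    have h3 : g.2 ≤ h.1 := by
      by_contra hc; push_neg at hc; exact hmem ⟨hlt, hc⟩
    linarith
  exact Set.Finite.of_finite_image (sep_finite hδ hLsub hsep) hinj

private lemma chain {a b : ℝ} {f : ℝ → ℝ} (hf : ContinuousOn f (Set.Icc a b))
    {A : Set ℝ} (hA : A ⊆ Set.Icc a b) (hAc : IsClosed A)
    (M : Finset ℝ) (hM : ∀ m ∈ M, m ∉ f '' A) (P : Finset ℝ) :
    ↑P ⊆ A →
    (∀ p ∈ P, ∀ q ∈ P, p < q → ∃ m ∈ M, (f p < m ∧ m < f q) ∨ (f q < m ∧ m < f p)) →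
    ∃ W : Finset (ℝ × ℝ), P.card ≤ W.card + 1 ∧
      ∀ g ∈ W, g ∈ gaps A ∧
        (∃ m ∈ M, (f g.1 < m ∧ m < f g.2) ∨ (f g.2 < m ∧ m < f g.1)) ∧
        ∃ p ∈ P, g.2 ≤ p := by
  classical
  induction P using Finset.strongInduction with
  | _ P ih =>
    intro hPA hsep
    rcases P.eq_empty_or_nonempty with rfl | hPne
    · exact ⟨∅, by simp, by simp⟩
    have hp₂ : P.max' hPne ∈ P := P.max'_mem hPne
    set p₂ := P.max' hPne with hp₂def
    have hP'ss : P.erase p₂ ⊂ P := Finset.erase_ssubset hp₂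
    have hP'A : ↑(P.erase p₂) ⊆ A := fun t ht => hPA (by
      simp only [Finset.coe_erase, Set.mem_diff] at ht
      exact ht.1)
    have hP'sep : ∀ p ∈ P.erase p₂, ∀ q ∈ P.erase p₂, p < q →
        ∃ m ∈ M, (f p < m ∧ m < f q) ∨ (f q < m ∧ m < f p) :=
      fun p hp q hq hpq =>
        hsep p (Finset.mem_of_mem_erase hp) q (Finset.mem_of_mem_erase hq) hpq
    obtain ⟨W', hW'card, hW'⟩ := ih (P.erase p₂) hP'ss hP'A hP'sep
    have hcardP : (P.erase p₂).card + 1 = P.card := Finset.card_erase_add_one hp₂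
    rcases (P.erase p₂).eq_empty_or_nonempty with hP'e | hP'ne
    · refine ⟨W', ?_, fun g hg => ?_⟩
      · rw [hP'e] at hcardP; simp at hcardP; omega
      · obtain ⟨hg1, hg2, p, hp, hgp⟩ := hW' g hg
        exact ⟨hg1, hg2, p, Finset.mem_of_mem_erase hp, hgp⟩
    · have hp₁P' : (P.erase p₂).max' hP'ne ∈ P.erase p₂ := (P.erase p₂).max'_mem hP'ne
      set p₁ := (P.erase p₂).max' hP'ne with hp₁def
      have hp₁P : p₁ ∈ P := Finset.mem_of_mem_erase hp₁P'
      have hp₁₂ : p₁ < p₂ :=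
        lt_of_le_of_ne (P.le_max' p₁ hp₁P) (Finset.ne_of_mem_erase hp₁P')
      obtain ⟨m, hmM, hor⟩ := hsep p₁ hp₁P p₂ hp₂ hp₁₂
      obtain ⟨x, x', hgap, hux, hx'v, hstrad⟩ :=
        TL2 hf hA hAc (hM m hmM) (hPA hp₁P) (hPA hp₂) hp₁₂ hor
      obtain ⟨hxA, hx'A, hxx', hemp⟩ := hgap
      have hgap' : (x, x') ∈ gaps A := ⟨hxA, hx'A, hxx', hemp⟩
      have hnot : (x, x') ∉ W' := by
        intro hmem
        obtain ⟨-, -, p, hpP', hle⟩ := hW' _ hmem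
        have h5 : p ≤ p₁ := (P.erase p₂).le_max' p hpP'
        have h6 : x' ≤ p := hle
        linarith
      refine ⟨insert (x, x') W', ?_, ?_⟩
      · rw [Finset.card_insert_of_notMem hnot]
        omega
      · intro g hg
        rcases Finset.mem_insert.mp hg with rfl | hg'
        · exact ⟨hgap', ⟨m, hmM, hstrad⟩, p₂, hp₂, hx'v⟩
        · obtain ⟨hg1, hg2, p, hp, hgp⟩ := hW' g hg'
          exact ⟨hg1, hg2, p, Finset.mem_of_mem_erase hp, hgp⟩


/-- **Combinatorial lemma.** For `f : [a,b] → ℝ` continuous and `A ⊆ [a,b]` compact with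
`B := f(A)`, there is an injection `γ : Z(B) → Z(A)` such that each gap `z ∈ Z(B)` with
`γ(z) = (x, x')` satisfies `z ⊆ (f(x), f(x'))` (the open interval with endpoints
`f(x)` and `f(x')`). -/
theorem gaps_injection (a b : ℝ) (f : ℝ → ℝ) (hf : ContinuousOn f (Set.Icc a b))
    (A : Set ℝ) (hA : A ⊆ Set.Icc a b) (hAc : IsCompact A) :
    ∃ γ : gaps (f '' A) → gaps A, Function.Injective γ ∧
      ∀ z : gaps (f '' A),
        Set.Ioo (z : ℝ × ℝ).1 (z : ℝ × ℝ).2 ⊆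
          Set.uIoo (f ((γ z : ℝ × ℝ)).1) (f ((γ z : ℝ × ℝ)).2) := by
  classical
  have hAcl : IsClosed A := hAc.isClosed
  set B := f '' A with hBdef
  have hmidnot : ∀ p : ℝ × ℝ, p ∈ gaps B → midp p ∉ B := by
    rintro p ⟨h1, h2, h3, h4⟩ hmem
    have hm := midp_mem h3
    have hx : midp p ∈ Ioo p.1 p.2 ∩ B := ⟨⟨hm.1, hm.2⟩, hmem⟩
    rw [h4] at hx; exact hx
  have hstrad : ∀ p : ℝ × ℝ, p ∈ gaps B → ∀ c d : ℝ, c ∈ B → d ∈ B →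
      midp p ∈ uIoo c d → min c d ≤ p.1 ∧ p.2 ≤ max c d := by
    rintro p ⟨h1, h2, h3, h4⟩ c d hc hd hm
    rw [← Ioo_min_max, mem_Ioo] at hm
    obtain ⟨hm1, hm2⟩ := hm
    obtain ⟨hma, hmb⟩ := midp_mem h3
    have hminB : min c d ∈ B := by
      rcases min_cases c d with ⟨h, -⟩ | ⟨h, -⟩ <;> rw [h] <;> assumption
    have hmaxB : max c d ∈ B := by
      rcases max_cases c d with ⟨h, -⟩ | ⟨h, -⟩ <;> rw [h] <;> assumption
    constructor
    · by_contra hcon; push_neg at hcon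
      have hx : min c d ∈ Ioo p.1 p.2 ∩ B := ⟨⟨hcon, lt_trans hm1 hmb⟩, hminB⟩
      rw [h4] at hx; exact hx
    · by_contra hcon; push_neg at hcon
      have hx : max c d ∈ Ioo p.1 p.2 ∩ B := ⟨⟨lt_trans hma hm2, hcon⟩, hmaxB⟩
      rw [h4] at hx; exact hx
  have hTfin : ∀ z : ℝ × ℝ, z ∈ gaps B →
      {g : ℝ × ℝ | g ∈ gaps A ∧ midp z ∈ uIoo (f g.1) (f g.2)}.Finite := by
    intro z hz
    obtain ⟨hz1, hz2, hz3, hz4⟩ := hz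
    have hzm : z ∈ gaps B := ⟨hz1, hz2, hz3, hz4⟩
    have huc := (isCompact_Icc : IsCompact (Set.Icc a b)).uniformContinuousOn_of_continuous hf
    rw [Metric.uniformContinuousOn_iff] at huc
    obtain ⟨δ, hδ, hδp⟩ := huc (z.2 - z.1) (by linarith)
    apply (gaps_large_finite hA hδ).subset
    rintro g ⟨hggap, hgmid⟩
    refine ⟨hggap, ?_⟩
    obtain ⟨hgA1, hgA2, hglt, hge⟩ := hggap
    have h1 := hstrad z hzm (f g.1) (f g.2) ⟨g.1, hgA1, rfl⟩ ⟨g.2, hgA2, rfl⟩ hgmid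
    have hmin := h1.1
    have hmax := h1.2
    have h2 : z.2 - z.1 ≤ |f g.1 - f g.2| := by
      rcases le_total (f g.1) (f g.2) with h | h
      · rw [min_eq_left h] at hmin; rw [max_eq_right h] at hmax
        rw [abs_of_nonpos (by linarith : f g.1 - f g.2 ≤ 0)]; linarith
      · rw [min_eq_right h] at hmin; rw [max_eq_left h] at hmax
        rw [abs_of_nonneg (by linarith : (0:ℝ) ≤ f g.1 - f g.2)]; linarith
    by_contra hcon
    push_neg at hcon
    have h3 : dist g.1 g.2 < δ := by
      rw [Real.dist_eq, abs_of_nonpos (by linarith : g.1 - g.2 ≤ 0)]; linarith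
    have h4 := hδp g.1 (hA hgA1) g.2 (hA hgA2) h3
    rw [Real.dist_eq] at h4
    linarith
  set t : gaps B → Finset (ℝ × ℝ) := fun z => (hTfin z.1 z.2).toFinset with htdef
  have hall : ∀ s : Finset ↥(gaps B), s.card ≤ (s.biUnion t).card := by
    intro s
    rcases s.eq_empty_or_nonempty with rfl | hs
    · simp
    have hav : ∀ z : ↥(gaps B), ∃ x, x ∈ A ∧ f x = (z : ℝ × ℝ).1 := fun z => z.2.1
    choose av havA havf using hav
    have hbv : ∀ z : ↥(gaps B), ∃ x, x ∈ A ∧ f x = (z : ℝ × ℝ).2 := fun z => z.2.2.1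
    choose bv hbvA hbvf using hbv
    obtain ⟨zh, hzhs, hzhmax⟩ := s.exists_max_image (fun z : ↥(gaps B) => midp (z : ℝ × ℝ)) hs
    have hord : ∀ z : ↥(gaps B), z ∈ s → z ≠ zh → (z : ℝ × ℝ).2 ≤ (zh : ℝ × ℝ).1 := by
      intro z hzs hne
      rcases gaps_disj z.2 zh.2 (fun he => hne (Subtype.ext he)) with h | h
      · exact h
      · exfalso
        have h1 := hzhmax z hzs
        obtain ⟨h2a, h2b⟩ := midp_mem (z.2.2.2.1 : (z : ℝ × ℝ).1 < (z : ℝ × ℝ).2)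
        obtain ⟨h3a, h3b⟩ := midp_mem (zh.2.2.2.1 : (zh : ℝ × ℝ).1 < (zh : ℝ × ℝ).2)
        linarith
    have hαle : ∀ z : ↥(gaps B), z ∈ s → (z : ℝ × ℝ).1 ≤ (zh : ℝ × ℝ).1 := by
      intro z hzs
      by_cases hne : z = zh
      · rw [hne]
      · have h1 := hord z hzs hne
        have h2 : (z : ℝ × ℝ).1 < (z : ℝ × ℝ).2 := z.2.2.2.1
        linarith
    have hMprop : ∀ m ∈ s.image (fun z : ↥(gaps B) => midp (z : ℝ × ℝ)), m ∉ f '' A := by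
      intro m hm
      rw [Finset.mem_image] at hm
      obtain ⟨z, hzs, rfl⟩ := hm
      exact hmidnot _ z.2
    have havinj : Set.InjOn av ↑s := by
      intro z _ z' _ he
      have h1 : (z : ℝ × ℝ).1 = (z' : ℝ × ℝ).1 := by rw [← havf z, ← havf z', he]
      exact Subtype.ext (gap_fst_inj z.2 z'.2 h1)
    have hbvnot : bv zh ∉ s.image av := by
      rw [Finset.mem_image]
      rintro ⟨z, hzs, he⟩
      have h1 : (zh : ℝ × ℝ).2 = (z : ℝ × ℝ).1 := by rw [← hbvf zh, ← havf z, he]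
      have h2 := hαle z hzs
      have h3 : (zh : ℝ × ℝ).1 < (zh : ℝ × ℝ).2 := zh.2.2.2.1
      linarith
    have hPcard : (insert (bv zh) (s.image av)).card = s.card + 1 := by
      rw [Finset.card_insert_of_notMem hbvnot, Finset.card_image_of_injOn havinj]
    have hPAsub : ↑(insert (bv zh) (s.image av)) ⊆ A := by
      intro x hx
      simp only [Finset.coe_insert, Set.mem_insert_iff, Finset.coe_image, Set.mem_image] at hx
      rcases hx with rfl | ⟨z, hzs, rfl⟩
      · exact hbvA zh
      · exact havA z
    have hH1 : ∀ z : ↥(gaps B), z ∈ s →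
        f (av z) < midp (zh : ℝ × ℝ) ∧ midp (zh : ℝ × ℝ) < f (bv zh) := by
      intro z hzs
      obtain ⟨h3a, h3b⟩ := midp_mem (zh.2.2.2.1 : (zh : ℝ × ℝ).1 < (zh : ℝ × ℝ).2)
      have h2 := hαle z hzs
      rw [havf z, hbvf zh]
      exact ⟨lt_of_le_of_lt h2 h3a, h3b⟩
    have hsepP : ∀ p ∈ insert (bv zh) (s.image av), ∀ q ∈ insert (bv zh) (s.image av),
        p < q → ∃ m ∈ s.image (fun z : ↥(gaps B) => midp (z : ℝ × ℝ)),
          (f p < m ∧ m < f q) ∨ (f q < m ∧ m < f p) := by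
      have hH2 : ∀ z ∈ s, ∀ z' ∈ s, z ≠ z' →
          ∃ m ∈ s.image (fun z : ↥(gaps B) => midp (z : ℝ × ℝ)),
            (f (av z) < m ∧ m < f (av z')) ∨ (f (av z') < m ∧ m < f (av z)) := by
        intro z hzs z' hz's hne
        rcases gaps_disj z.2 z'.2 (fun he => hne (Subtype.ext he)) with h | h
        · refine ⟨midp (z : ℝ × ℝ), Finset.mem_image_of_mem _ hzs, Or.inl ⟨?_, ?_⟩⟩
          · rw [havf z]; exact (midp_mem z.2.2.2.1).1
          · rw [havf z']; exact lt_of_lt_of_le (midp_mem z.2.2.2.1).2 h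
        · refine ⟨midp (z' : ℝ × ℝ), Finset.mem_image_of_mem _ hz's, Or.inr ⟨?_, ?_⟩⟩
          · rw [havf z']; exact (midp_mem z'.2.2.2.1).1
          · rw [havf z]; exact lt_of_lt_of_le (midp_mem z'.2.2.2.1).2 h
      intro p hp q hq hpq
      rcases Finset.mem_insert.mp hp with hp1 | hp2 <;>
        rcases Finset.mem_insert.mp hq with hq1 | hq2
      · exfalso; rw [hp1, hq1] at hpq; exact lt_irrefl _ hpq
      · subst hp1
        rw [Finset.mem_image] at hq2
        obtain ⟨z, hzs, rfl⟩ := hq2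
        exact ⟨midp (zh : ℝ × ℝ), Finset.mem_image_of_mem _ hzhs,
          Or.inr ⟨(hH1 z hzs).1, (hH1 z hzs).2⟩⟩
      · subst hq1
        rw [Finset.mem_image] at hp2
        obtain ⟨z, hzs, rfl⟩ := hp2
        exact ⟨midp (zh : ℝ × ℝ), Finset.mem_image_of_mem _ hzhs,
          Or.inl ⟨(hH1 z hzs).1, (hH1 z hzs).2⟩⟩
      · rw [Finset.mem_image] at hp2 hq2
        obtain ⟨z, hzs, rfl⟩ := hp2
        obtain ⟨z', hz's, rfl⟩ := hq2
        have hne : z ≠ z' := by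
          intro he; rw [he] at hpq; exact lt_irrefl _ hpq
        exact hH2 z hzs z' hz's hne
    obtain ⟨W, hWcard, hWprop⟩ := chain hf hA hAcl
      (s.image (fun z : ↥(gaps B) => midp (z : ℝ × ℝ))) hMprop
      (insert (bv zh) (s.image av)) hPAsub hsepP
    have hWsub : W ⊆ s.biUnion t := by
      intro g hg
      obtain ⟨hggap, ⟨m, hmM, hor⟩, -⟩ := hWprop g hg
      rw [Finset.mem_image] at hmM
      obtain ⟨z, hzs, rfl⟩ := hmM
      rw [Finset.mem_biUnion]
      refine ⟨z, hzs, ?_⟩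
      simp only [htdef, Set.Finite.mem_toFinset, Set.mem_setOf_eq]
      refine ⟨hggap, ?_⟩
      rcases hor with ⟨h1, h2⟩ | ⟨h1, h2⟩
      · exact Set.mem_uIoo_of_lt h1 h2
      · exact Set.mem_uIoo_of_gt h1 h2
    have := Finset.card_le_card hWsub
    omega
  obtain ⟨γ₀, hγinj, hγmem⟩ := (Finset.all_card_le_biUnion_card_iff_exists_injective t).mp hall
  have hγT : ∀ z : ↥(gaps B), γ₀ z ∈ gaps A ∧
      midp (z : ℝ × ℝ) ∈ uIoo (f (γ₀ z).1) (f (γ₀ z).2) := by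
    intro z
    have h1 := hγmem z
    simp only [htdef, Set.Finite.mem_toFinset, Set.mem_setOf_eq] at h1
    exact h1
  refine ⟨fun z => ⟨γ₀ z, (hγT z).1⟩, ?_, ?_⟩
  · intro z z' he
    exact hγinj (congrArg Subtype.val he)
  · intro z
    obtain ⟨hg, hmidmem⟩ := hγT z
    obtain ⟨hgA1, hgA2, hglt, hge⟩ := hg
    have h1 := hstrad _ z.2 (f (γ₀ z).1) (f (γ₀ z).2) ⟨_, hgA1, rfl⟩ ⟨_, hgA2, rfl⟩ hmidmem
    rw [show ((⟨γ₀ z, (hγT z).1⟩ : ↥(gaps A)) : ℝ × ℝ) = γ₀ z from rfl]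
    rw [← Set.Ioo_min_max]
    exact Set.Ioo_subset_Ioo h1.1 h1.2
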